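/- arXiv:2012.05599 — 6 statements merged into one kernel-verified Lean document; each statement's English description precedes it below -/
import Mathlib

section
/- For distinct complex numbers x0,…,x_{2n+1}, the product over i from 1 to n of the cross-ratios [x0, x_{2i-1}, x_{2i}, x_{2i+1}] equals (-1)^{n-1} · ((x0-x1)(x2-x3)···(x_{2n}-x_{2n+1})) / ((x1-x2)(x3-x4)···(x_{2n+1}-x0)). -/
/-!
Each cross-ratio factors as `[x₀, x_{2i-1}, x_{2i}, x_{2i+1}]`
`= -((x₀ - x_{2i-1}) / (x₀ - x_{2i+1})) · ((x_{2i} - x_{2i+1}) / (x_{2i-1} - x_{2i}))`.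
The first factors telescope to `(x₀ - x₁) / (x₀ - x_{2n+1})`, the second multiply to the ratio of
alternating consecutive differences, and the `n` signs together with
`x₀ - x_{2n+1} = -(x_{2n+1} - x₀)` give `(-1)^(n-1)`.
-/

open Finset

/-- The cross-ratio of four complex numbers: `[a,b,c,d] = ((a-b)(c-d))/((a-d)(c-b))`. -/
noncomputable def crossRatio (a b c d : ℂ) : ℂ := ((a - b) * (c - d)) / ((a - d) * (c - b))

theorem Finset.prod_range_div₀' {G₀ : Type*} [CommGroupWithZero G₀] (f : ℕ → G₀)
    (n : ℕ) (hf : ∀ i ≤ n, f i ≠ 0) : ∏ i ∈ range n, f i / f (i + 1) = f 0 / f n := by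
  induction n with
  | zero => simp [div_self (hf 0 le_rfl)]
  | succ n ih =>
    rw [prod_range_succ, ih fun i hi => hf i (by omega), div_mul_div_cancel₀ (hf n (by omega))]

theorem crossRatio_eq_neg_div_mul_div (a b c d : ℂ) :
    crossRatio a b c d = -((a - b) / (a - d) * ((c - d) / (b - c))) := by
  rw [crossRatio, ← neg_sub b c, mul_neg, div_neg, mul_div_mul_comm]

theorem prod_range_crossRatio (x : ℕ → ℂ) (n : ℕ) (hx : ∀ i ≤ n, x 0 ≠ x (2 * i + 1)) :
    ∏ i ∈ range n, crossRatio (x 0) (x (2 * i + 1)) (x (2 * i + 2)) (x (2 * i + 3)) =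
      (-1) ^ n * ((∏ i ∈ range (n + 1), (x (2 * i) - x (2 * i + 1))) /
        ((∏ i ∈ range n, (x (2 * i + 1) - x (2 * i + 2))) * (x 0 - x (2 * n + 1)))) := by
  have htel : ∏ i ∈ range n, (x 0 - x (2 * i + 1)) / (x 0 - x (2 * i + 3)) =
      (x 0 - x 1) / (x 0 - x (2 * n + 1)) :=
    prod_range_div₀' (fun i => x 0 - x (2 * i + 1)) n fun i hi => sub_ne_zero.2 (hx i hi)
  have hsplit : ∏ i ∈ range (n + 1), (x (2 * i) - x (2 * i + 1)) =
      (∏ i ∈ range n, (x (2 * i + 2) - x (2 * i + 3))) * (x 0 - x 1) :=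
    prod_range_succ' (fun i => x (2 * i) - x (2 * i + 1)) n
  simp_rw [crossRatio_eq_neg_div_mul_div, prod_neg, prod_mul_distrib, htel, prod_div_distrib,
    card_range, hsplit, div_mul_div_comm, mul_comm (x 0 - x 1), mul_comm (x 0 - x (2 * n + 1))]

/-- For distinct complex numbers `x0,…,x_{2n+1}`,
`∏_{i=1}^n [x0, x_{2i-1}, x_{2i}, x_{2i+1}]
  = (-1)^{n-1} · ((x0-x1)(x2-x3)···(x_{2n}-x_{2n+1})) / ((x1-x2)(x3-x4)···(x_{2n+1}-x0))`. -/
theorem prod_crossRatio_eq (n : ℕ) (hn : 1 ≤ n) (x : ℕ → ℂ)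
    (hdist : ∀ i ≤ 2 * n + 1, ∀ j ≤ 2 * n + 1, i ≠ j → x i ≠ x j) :
    ∏ i ∈ Finset.Icc 1 n,
        crossRatio (x 0) (x (2 * i - 1)) (x (2 * i)) (x (2 * i + 1)) =
      (-1) ^ (n - 1) *
        ((∏ i ∈ Finset.range (n + 1), (x (2 * i) - x (2 * i + 1))) /
          ((∏ i ∈ Finset.range n, (x (2 * i + 1) - x (2 * i + 2))) * (x (2 * n + 1) - x 0))) := by
  obtain ⟨m, rfl⟩ : ∃ m, n = m + 1 := ⟨n - 1, by omega⟩
  have hx : ∀ i ≤ m + 1, x 0 ≠ x (2 * i + 1) := fun i hi =>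
    hdist 0 (by omega) (2 * i + 1) (by omega) (by omega)
  have hshift :
      ∏ i ∈ Icc 1 (m + 1), crossRatio (x 0) (x (2 * i - 1)) (x (2 * i)) (x (2 * i + 1)) =
      ∏ i ∈ range (m + 1), crossRatio (x 0) (x (2 * i + 1)) (x (2 * i + 2)) (x (2 * i + 3)) := by
    rw [← Ico_add_one_right_eq_Icc, range_eq_Ico, ← prod_Ico_add' _ 0 (m + 1) 1]
    exact prod_congr rfl fun i _ => by rw [show 2 * (i + 1) - 1 = 2 * i + 1 by omega]; rfl
  rw [hshift, prod_range_crossRatio x (m + 1) hx, ← neg_sub (x (2 * (m + 1) + 1)), mul_neg,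
    div_neg, pow_succ, add_tsub_cancel_right]
  ring
end

section
/- If an alternating polygon P is decomposed by a diagonal into two alternating polygons P1 and P2, then the cross-ratio function satisfies cr(P) = cr(P1)·cr(P2). -/
/-- The cross-ratio function of an alternating `(2n+2)`-gon `P = (p 0, …, p (2n+1))` with
vertices labelled by points `x (p i)`:
`cr(P) = ∏_{i=1}^n [x_{p_0}, x_{p_{2i-1}}, x_{p_{2i}}, x_{p_{2i+1}}]` if `P` is even
(i.e. `p 0` is even), and the inverse of this product if `P` is odd. -/
noncomputable def crPolygon (x : ℕ → ℂ) (p : ℕ → ℕ) (n : ℕ) : ℂ :=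
  if Even (p 0) then
    ∏ i ∈ Finset.range n,
      crossRatio (x (p 0)) (x (p (2 * i + 1))) (x (p (2 * i + 2))) (x (p (2 * i + 3)))
  else
    (∏ i ∈ Finset.range n,
      crossRatio (x (p 0)) (x (p (2 * i + 1))) (x (p (2 * i + 2))) (x (p (2 * i + 3))))⁻¹

theorem crPolygon_succ (x : ℕ → ℂ) (p : ℕ → ℕ) (n : ℕ) :
    crPolygon x p (n + 1) = crPolygon x p n *
      let c := crossRatio (x (p 0)) (x (p (2 * n + 1))) (x (p (2 * n + 2))) (x (p (2 * n + 3)))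
      if Even (p 0) then c else c⁻¹ := by
  unfold crPolygon
  split_ifs <;> simp only [Finset.prod_range_succ, mul_inv]

theorem mod_two_eq_add_of_odd_sub {p : ℕ → ℕ} {m : ℕ}
    (halt : ∀ k < m, Odd (p (k + 1) - p k)) :
    ∀ k ≤ m, p k % 2 = (p 0 + k) % 2
  | 0, _ => rfl
  | k + 1, hk => by
    obtain ⟨u, hu⟩ := halt k (by omega)
    have := mod_two_eq_add_of_odd_sub halt k (by omega)
    omega

namespace AlternatingPolygon

variable (x : ℕ → ℂ)

noncomputable def edgeFactor (u v : ℕ) : ℂ :=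
  if Even u then x u - x v else (x v - x u)⁻¹

noncomputable def pathProd (p : ℕ → ℕ) (m : ℕ) : ℂ :=
  ∏ k ∈ Finset.range m, edgeFactor x (p k) (p (k + 1))

noncomputable def cycleProd (p : ℕ → ℕ) (m : ℕ) : ℂ :=
  pathProd x p m * edgeFactor x (p m) (p 0)

variable {x}

theorem edgeFactor_mul_edgeFactor_swap {u v : ℕ} (huv : Odd (u + v)) (hx : x u ≠ x v) :
    edgeFactor x u v * edgeFactor x v u = 1 := by
  rw [Nat.odd_iff] at huv
  by_cases hu : Even u
  · have hv : ¬Even v := by rw [Nat.even_iff] at *; omega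
    simp only [edgeFactor, hu, hv, if_true, if_false]
    exact mul_inv_cancel₀ (sub_ne_zero.mpr hx)
  · have hv : Even v := by rw [Nat.even_iff] at *; omega
    simp only [edgeFactor, hu, hv, if_true, if_false]
    exact inv_mul_cancel₀ (sub_ne_zero.mpr hx.symm)

theorem edgeFactor_quadrilateral {a b c d : ℕ} (hab : Odd (a + b)) (hbc : Odd (b + c))
    (hcd : Odd (c + d)) :
    edgeFactor x a b * edgeFactor x b c * edgeFactor x c d * edgeFactor x d a =
      if Even a then crossRatio (x a) (x b) (x c) (x d)
      else (crossRatio (x a) (x b) (x c) (x d))⁻¹ := by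
  rw [Nat.odd_iff] at hab hbc hcd
  by_cases ha : Even a
  · have hb : ¬Even b := by rw [Nat.even_iff] at *; omega
    have hc : Even c := by rw [Nat.even_iff] at *; omega
    have hd : ¬Even d := by rw [Nat.even_iff] at *; omega
    simp only [edgeFactor, crossRatio, ha, hb, hc, hd, if_true, if_false, div_eq_mul_inv, mul_inv]
    ring
  · have hb : Even b := by rw [Nat.even_iff] at *; omega
    have hc : ¬Even c := by rw [Nat.even_iff] at *; omega
    have hd : Even d := by rw [Nat.even_iff] at *; omega
    simp only [edgeFactor, crossRatio, ha, hb, hc, hd, if_true, if_false, div_eq_mul_inv, mul_inv]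
    rw [← neg_sub (x a) (x b), ← neg_sub (x c) (x d)]
    simp only [inv_neg, inv_inv]
    ring

theorem pathProd_succ (p : ℕ → ℕ) (m : ℕ) :
    pathProd x p (m + 1) = pathProd x p m * edgeFactor x (p m) (p (m + 1)) :=
  Finset.prod_range_succ _ _

theorem pathProd_add (p : ℕ → ℕ) (a b : ℕ) :
    pathProd x p (a + b) = pathProd x p a * pathProd x (fun k => p (a + k)) b := by
  simp only [pathProd, Finset.prod_range_add, add_assoc]

theorem pathProd_congr {p q : ℕ → ℕ} {m : ℕ} (h : ∀ k ≤ m, p k = q k) :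
    pathProd x p m = pathProd x q m :=
  Finset.prod_congr rfl fun k hk => by
    rw [h k (by simp at hk; omega), h (k + 1) (by simp at hk; omega)]

theorem cycleProd_eq_mul_of_diagonal {p : ℕ → ℕ} {i t m : ℕ} (hm : i + t + 1 ≤ m)
    (hpar : Odd (p i + p (i + t + 1))) (hx : x (p i) ≠ x (p (i + t + 1))) :
    cycleProd x p m =
      cycleProd x (fun k => if k ≤ i then p k else p (k + t)) (m - t) *
        cycleProd x (fun k => p (i + k)) (t + 1) := by
  obtain ⟨r, rfl⟩ : ∃ r, m = i + (t + 1) + r := ⟨m - (i + t + 1), by omega⟩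
  set q : ℕ → ℕ := fun k => if k ≤ i then p k else p (k + t) with hq
  have hhead : pathProd x q i = pathProd x p i := pathProd_congr fun k hk => if_pos hk
  have hdiag : edgeFactor x (q i) (q (i + 1)) = edgeFactor x (p i) (p (i + t + 1)) := by
    simp only [hq, le_refl, if_true, if_neg (Nat.not_succ_le_self i), add_right_comm]
  have htail :
      pathProd x (fun k => q (i + 1 + k)) r = pathProd x (fun k => p (i + (t + 1) + k)) r :=
    pathProd_congr fun k _ => by simp only [hq, if_neg (show ¬i + 1 + k ≤ i by omega)]; ring_nf
  have hlast : q (i + 1 + r) = p (i + (t + 1) + r) := by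
    simp only [hq, if_neg (show ¬i + 1 + r ≤ i by omega)]; ring_nf
  have hcancel := edgeFactor_mul_edgeFactor_swap hpar hx
  rw [show i + (t + 1) + r - t = i + 1 + r by omega, cycleProd, cycleProd, cycleProd,
    pathProd_add p (i + (t + 1)) r, pathProd_add p i (t + 1), pathProd_add q (i + 1) r,
    pathProd_succ q i, hhead, hdiag, htail, hlast,
    show q 0 = p 0 from if_pos (Nat.zero_le i), add_zero, ← add_assoc]
  linear_combination -(pathProd x p i * pathProd x (fun k => p (i + k)) (t + 1) *
    pathProd x (fun k => p (i + t + 1 + k)) r * edgeFactor x (p (i + t + 1 + r)) (p 0)) * hcancel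

end AlternatingPolygon

open AlternatingPolygon in
theorem crPolygon_eq_cycleProd {x : ℕ → ℂ} {p : ℕ → ℕ} :
    ∀ {n : ℕ}, (∀ k ≤ 2 * n + 1, p k % 2 = (p 0 + k) % 2) →
      (∀ k ≤ n, x (p 0) ≠ x (p (2 * k + 1))) → crPolygon x p n = cycleProd x p (2 * n + 1)
  | 0, hpar, hx => by
    have := edgeFactor_mul_edgeFactor_swap (x := x) (u := p 0) (v := p 1)
      (Nat.odd_iff.mpr (by have := hpar 1 le_rfl; omega)) (hx 0 le_rfl)
    simp [crPolygon, cycleProd, pathProd, this]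
  | n + 1, hpar, hx => by
    have hodd : ∀ k ≤ 2 * n + 2, Odd (p k + p (k + 1)) := fun k hk => by
      have := hpar k (by omega); have := hpar (k + 1) (by omega)
      exact Nat.odd_iff.mpr (by omega)
    have hdiag := edgeFactor_mul_edgeFactor_swap (x := x) (u := p 0) (v := p (2 * n + 1))
      (Nat.odd_iff.mpr (by have := hpar (2 * n + 1) (by omega); omega)) (hx n (by omega))
    have hquad := edgeFactor_quadrilateral (x := x) (a := p 0)
      (Nat.odd_iff.mpr (by have := hpar (2 * n + 1) (by omega); omega))
      (hodd (2 * n + 1) (by omega)) (hodd (2 * n + 2) le_rfl)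
    rw [crPolygon_succ, ← hquad,
      crPolygon_eq_cycleProd (fun k hk => hpar k (by omega)) (fun k hk => hx k (by omega)),
      cycleProd, cycleProd, show 2 * (n + 1) + 1 = 2 * n + 1 + 1 + 1 by ring,
      pathProd_succ _ (2 * n + 1 + 1), pathProd_succ _ (2 * n + 1)]
    linear_combination (pathProd x p (2 * n + 1) * edgeFactor x (p (2 * n + 1)) (p (2 * n + 1 + 1))
      * edgeFactor x (p (2 * n + 1 + 1)) (p (2 * n + 1 + 1 + 1))
      * edgeFactor x (p (2 * n + 1 + 1 + 1)) (p 0)) * hdiag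

open AlternatingPolygon in
/-- Here `P1 = (p 0, …, p i, p j, …, p (2n+1))` and `P2 = (p i, …, p j)`, `j = i + 2s + 1`. -/
theorem crPolygon_decomposition_general (n s i : ℕ) (x : ℕ → ℂ) (p : ℕ → ℕ)
    (halt : ∀ k < 2 * n + 1, Odd (p (k + 1) - p k))
    (hdist : ∀ k ≤ 2 * n + 1, ∀ l ≤ 2 * n + 1, k ≠ l → x (p k) ≠ x (p l))
    (hij : i + 2 * s + 1 ≤ 2 * n + 1) :
    crPolygon x p n =
      crPolygon x (fun k => if k ≤ i then p k else p (k + 2 * s)) (n - s) *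
        crPolygon x (fun k => p (i + k)) s := by
  have hpar := mod_two_eq_add_of_odd_sub halt
  have hi := hpar i (by omega)
  have hj := hpar (i + 2 * s + 1) hij
  rw [crPolygon_eq_cycleProd hpar fun k hk => hdist _ (by omega) _ (by omega) (by omega),
    crPolygon_eq_cycleProd (n := n - s), crPolygon_eq_cycleProd (n := s),
    show 2 * (n - s) + 1 = 2 * n + 1 - 2 * s by omega]
  · exact cycleProd_eq_mul_of_diagonal hij (Nat.odd_iff.mpr (by omega))
      (hdist _ (by omega) _ hij (by omega))
  · intro k hk
    have := hpar (i + k) (by omega)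
    rw [add_zero]
    omega
  · intro k hk
    exact hdist _ (by omega) _ (by omega) (by omega)
  · intro k hk
    have := hpar k
    have := hpar (k + 2 * s)
    split_ifs <;> omega
  · intro k hk
    split_ifs <;> exact hdist _ (by omega) _ (by omega) (by omega)

/-- If an alternating polygon `P = (p 0, …, p (2n+1))` is decomposed by the diagonal joining
vertex `i` and vertex `j = i + 2s + 1` (vertices of opposite parity) into the two alternating
polygons `P1 = (p 0, …, p i, p j, …, p (2n+1))` and `P2 = (p i, …, p j)`, then
`cr(P) = cr(P1) · cr(P2)`. -/
theorem crPolygon_decomposition (n s i : ℕ) (x : ℕ → ℂ) (p : ℕ → ℕ)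
    (hmono : StrictMonoOn p (Set.Iic (2 * n + 1)))
    (halt : ∀ k < 2 * n + 1, Odd (p (k + 1) - p k))
    (hdist : ∀ k ≤ 2 * n + 1, ∀ l ≤ 2 * n + 1, k ≠ l → x (p k) ≠ x (p l))
    (hs : 1 ≤ s) (hij : i + 2 * s + 1 ≤ 2 * n + 1)
    (hdiag : ¬(i = 0 ∧ i + 2 * s + 1 = 2 * n + 1)) :
    crPolygon x p n =
      crPolygon x (fun k => if k ≤ i then p k else p (k + 2 * s)) (n - s) *
        crPolygon x (fun k => p (i + k)) s :=
  crPolygon_decomposition_general n s i x p halt hdist hij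
end

section
/- Let A be a commutative semigroup and QSh^A the quasi-shuffle algebra on words over A. Then the quasi-shuffle product ⋆ is associative. -/
/-- The quasi-shuffle product on words over an alphabet `A` carrying a (semigroup) product,
with values in the free `ℚ`-vector space on words: `ω⋆1 = 1⋆ω = ω` and
`(a1ω1)⋆(a2ω2) = a1(ω1⋆(a2ω2)) + a2((a1ω1)⋆ω2) + (a1·a2)(ω1⋆ω2)`. -/
noncomputable def qsh {A : Type*} [Mul A] : List A → List A → (List A →₀ ℚ)
  | [], w => Finsupp.single w 1
  | a :: w1, [] => Finsupp.single (a :: w1) 1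
  | a :: w1, b :: w2 =>
      Finsupp.mapDomain (a :: ·) (qsh w1 (b :: w2)) +
      Finsupp.mapDomain (b :: ·) (qsh (a :: w1) w2) +
      Finsupp.mapDomain ((a * b) :: ·) (qsh w1 w2)
  termination_by x y => x.length + y.length

/-- The bilinear extension of the quasi-shuffle product to the free `ℚ`-vector space
on words over `A`. -/
noncomputable def qshStar {A : Type*} [Mul A] (f g : List A →₀ ℚ) : List A →₀ ℚ :=
  f.sum fun w1 c1 => g.sum fun w2 c2 => (c1 * c2) • qsh w1 w2

/-!
Write `aX` for `prepend a X`. The bilinear extension `⋆` obeys the recursion defining the product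
of words, `aX ⋆ bY = a(X ⋆ bY) + b(aX ⋆ Y) + (ab)(X ⋆ Y)`. Applying it twice expands both
`(aX ⋆ bY) ⋆ cZ` and `aX ⋆ (bY ⋆ cZ)` into seven terms, which agree pairwise by induction on the
total length of the words, the last pair because `(ab)c = a(bc)`. Associativity on words then
extends trilinearly.
-/

open Finsupp

noncomputable def prepend {A : Type*} (a : A) : (List A →₀ ℚ) →ₗ[ℚ] (List A →₀ ℚ) :=
  lmapDomain ℚ ℚ (a :: ·)

theorem prepend_single {A : Type*} (a : A) (u : List A) (c : ℚ) :
    prepend a (single u c) = single (a :: u) c :=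
  mapDomain_single

section Bilinear

variable {A : Type*} [Mul A]

theorem qshStar_add_left (f f' g : List A →₀ ℚ) :
    qshStar (f + f') g = qshStar f g + qshStar f' g := by
  unfold qshStar
  refine sum_add_index' (fun u => by simp) (fun u c c' => ?_)
  rw [← sum_add]
  exact sum_congr fun v _ => by rw [add_mul, add_smul]

theorem qshStar_add_right (f g g' : List A →₀ ℚ) :
    qshStar f (g + g') = qshStar f g + qshStar f g' := by
  unfold qshStar
  rw [← sum_add]
  exact sum_congr fun u _ =>
    sum_add_index' (fun v => by simp) (fun v d d' => by rw [mul_add, add_smul])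

theorem qshStar_smul_left (s : ℚ) (f g : List A →₀ ℚ) :
    qshStar (s • f) g = s • qshStar f g := by
  unfold qshStar
  rw [sum_smul_index (fun u => by simp), smul_sum]
  refine sum_congr fun u _ => ?_
  rw [smul_sum]
  exact sum_congr fun v _ => by rw [mul_assoc, mul_smul]

theorem qshStar_smul_right (s : ℚ) (f g : List A →₀ ℚ) :
    qshStar f (s • g) = s • qshStar f g := by
  unfold qshStar
  rw [smul_sum]
  refine sum_congr fun u _ => ?_
  rw [sum_smul_index (fun v => by simp), smul_sum]
  exact sum_congr fun v _ => by rw [smul_smul, mul_left_comm]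

@[simp]
theorem qshStar_zero_left (g : List A →₀ ℚ) : qshStar 0 g = 0 := by
  simp [qshStar]

@[simp]
theorem qshStar_zero_right (f : List A →₀ ℚ) : qshStar f 0 = 0 := by
  simp [qshStar]

theorem qshStar_single_single (u v : List A) (c d : ℚ) :
    qshStar (single u c) (single v d) = (c * d) • qsh u v := by
  unfold qshStar
  rw [sum_single_index (by simp), sum_single_index (by simp)]

end Bilinear

section Recursion

variable {A : Type*} [Mul A]

theorem qsh_nil_left (w : List A) : qsh [] w = single w 1 := by
  rw [qsh]

theorem qsh_nil_right (u : List A) : qsh u [] = single u 1 := by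
  cases u <;> rw [qsh]

theorem qsh_cons_cons (a b : A) (u v : List A) :
    qsh (a :: u) (b :: v) =
      prepend a (qsh u (b :: v)) + prepend b (qsh (a :: u) v) + prepend (a * b) (qsh u v) := by
  rw [qsh]; rfl

theorem qshStar_nil_left (g : List A →₀ ℚ) : qshStar (single [] 1) g = g := by
  induction g using induction_linear with
  | zero => exact qshStar_zero_right _
  | add g g' hg hg' => rw [qshStar_add_right, hg, hg']
  | single v d => rw [qshStar_single_single, qsh_nil_left, smul_single_one, one_mul]

theorem qshStar_nil_right (f : List A →₀ ℚ) : qshStar f (single [] 1) = f := by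
  induction f using induction_linear with
  | zero => exact qshStar_zero_left _
  | add f f' hf hf' => rw [qshStar_add_left, hf, hf']
  | single u c => rw [qshStar_single_single, qsh_nil_right, smul_single_one, mul_one]

theorem qshStar_prepend_prepend (a b : A) (F G : List A →₀ ℚ) :
    qshStar (prepend a F) (prepend b G) =
      prepend a (qshStar F (prepend b G)) + prepend b (qshStar (prepend a F) G) +
        prepend (a * b) (qshStar F G) := by
  induction F using induction_linear with
  | zero => simp
  | add F F' hF hF' =>
    simp only [map_add, qshStar_add_left, hF, hF']
    abel
  | single u c =>
    induction G using induction_linear with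
    | zero => simp
    | add G G' hG hG' =>
      simp only [map_add, qshStar_add_right, hG, hG']
      abel
    | single v d =>
      simp only [prepend_single, qshStar_single_single, qsh_cons_cons, smul_add, map_smul]

theorem qshStar_qshStar_prepend (a b c : A) (X Y Z : List A →₀ ℚ) :
    qshStar (qshStar (prepend a X) (prepend b Y)) (prepend c Z) =
      prepend a (qshStar (qshStar X (prepend b Y)) (prepend c Z)) +
      prepend b (qshStar (qshStar (prepend a X) Y) (prepend c Z)) +
      prepend (a * b) (qshStar (qshStar X Y) (prepend c Z)) +
      prepend c (qshStar (qshStar (prepend a X) (prepend b Y)) Z) +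
      prepend (a * c) (qshStar (qshStar X (prepend b Y)) Z) +
      prepend (b * c) (qshStar (qshStar (prepend a X) Y) Z) +
      prepend (a * b * c) (qshStar (qshStar X Y) Z) := by
  rw [qshStar_prepend_prepend a b, qshStar_add_left, qshStar_add_left,
    qshStar_prepend_prepend a c, qshStar_prepend_prepend b c, qshStar_prepend_prepend (a * b) c,
    qshStar_add_left, qshStar_add_left, map_add, map_add]
  abel

theorem qshStar_prepend_qshStar (a b c : A) (X Y Z : List A →₀ ℚ) :
    qshStar (prepend a X) (qshStar (prepend b Y) (prepend c Z)) =
      prepend a (qshStar X (qshStar (prepend b Y) (prepend c Z))) +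
      prepend b (qshStar (prepend a X) (qshStar Y (prepend c Z))) +
      prepend (a * b) (qshStar X (qshStar Y (prepend c Z))) +
      prepend c (qshStar (prepend a X) (qshStar (prepend b Y) Z)) +
      prepend (a * c) (qshStar X (qshStar (prepend b Y) Z)) +
      prepend (b * c) (qshStar (prepend a X) (qshStar Y Z)) +
      prepend (a * (b * c)) (qshStar X (qshStar Y Z)) := by
  rw [qshStar_prepend_prepend b c, qshStar_add_right, qshStar_add_right,
    qshStar_prepend_prepend a b, qshStar_prepend_prepend a c, qshStar_prepend_prepend a (b * c),
    qshStar_add_right, qshStar_add_right, map_add, map_add]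
  abel

end Recursion

theorem qshStar_assoc_single {A : Type*} [Semigroup A] :
    ∀ u v w : List A, qshStar (qshStar (single u 1) (single v 1)) (single w 1) =
      qshStar (single u 1) (qshStar (single v 1) (single w 1))
  | [], v, w => by rw [qshStar_nil_left, qshStar_nil_left]
  | u, v, [] => by rw [qshStar_nil_right, qshStar_nil_right]
  | a :: u, [], c :: w => by rw [qshStar_nil_right, qshStar_nil_left]
  | a :: u, b :: v, c :: w => by
    simp only [← prepend_single]
    rw [qshStar_qshStar_prepend, qshStar_prepend_qshStar, mul_assoc]
    simp only [prepend_single]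
    rw [qshStar_assoc_single u (b :: v) (c :: w), qshStar_assoc_single (a :: u) v (c :: w),
      qshStar_assoc_single u v (c :: w), qshStar_assoc_single (a :: u) (b :: v) w,
      qshStar_assoc_single u (b :: v) w, qshStar_assoc_single (a :: u) v w,
      qshStar_assoc_single u v w]
  termination_by u v w => u.length + v.length + w.length

/-- For a commutative semigroup alphabet `A`, the quasi-shuffle product on the free
`ℚ`-vector space on words over `A` is associative. -/
theorem qshStar_assoc {A : Type*} [CommSemigroup A] (f g h : List A →₀ ℚ) :
    qshStar (qshStar f g) h = qshStar f (qshStar g h) := by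
  induction f using induction_linear with
  | zero => simp
  | add f f' hf hf' => simp only [qshStar_add_left, hf, hf']
  | single u c =>
    induction g using induction_linear with
    | zero => simp
    | add g g' hg hg' => simp only [qshStar_add_left, qshStar_add_right, hg, hg']
    | single v d =>
      induction h using induction_linear with
      | zero => simp
      | add h h' hh hh' => simp only [qshStar_add_right, hh, hh']
      | single w e =>
        simp only [← smul_single_one _ c, ← smul_single_one _ d, ← smul_single_one _ e,
          qshStar_smul_left, qshStar_smul_right, qshStar_assoc_single]
end

section
/- Let x0,…,x_{m+1} be m+2 distinct lines (1-dimensional subspaces) l_0,…,l_{m+1} in a 2-dimensional symplectic vector space (V, ω) over a field of characteristic 0. Define E = Ker(⊕_{i=0}^{m+1} l_i → V) (the summation map) with quadratic form q(v) = Σ_{0≤i<j≤m+1} ω(v_i, v_j) for v = (v_0,…,v_{m+1}) ∈ E. For 0 ≤ i < j ≤ m+1, let E_I ⊆ E be the subspace of vectors supported on indices in I = {0,…,i, j,…,m+1} and E_{I'} the subspace supported on I' = {i, i+1,…, j}. Then E = E_I ⊕ E_{I'} and the two subspaces are orthogonal with respect to the bilinear form associated to q. -/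
open Module

variable (K : Type*) [Field K] (V : Type*) [AddCommGroup V] [Module K V]

/-- The linear map `(v_0,…,v_{n-1}) ↦ Σ_i v_i`. -/
noncomputable def sumProj (n : ℕ) : (Fin n → V) →ₗ[K] V :=
  ∑ i : Fin n, LinearMap.proj i

/-- `E = Ker(⊕_i l_i → V)`: the subspace of tuples `v` with `v i ∈ l i` for all `i` and
`Σ_i v_i = 0`, realized inside `Fin n → V`. -/
noncomputable def maslovE (n : ℕ) (l : Fin n → Submodule K V) : Submodule K (Fin n → V) :=
  (⨅ i : Fin n, (l i).comap (LinearMap.proj i)) ⊓ LinearMap.ker (sumProj K V n)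

/-- `E_I`: the subspace of `E` of vectors supported on the index set `I`. -/
noncomputable def maslovEI (n : ℕ) (l : Fin n → Submodule K V) (I : Set (Fin n)) :
    Submodule K (Fin n → V) :=
  maslovE K V n l ⊓
    ⨅ i ∈ Iᶜ, LinearMap.ker (LinearMap.proj (R := K) (φ := fun _ : Fin n => V) i)

/-- The symmetric bilinear form associated to the Maslov quadratic form
`q(v) = Σ_{p<q} ω(v_p, v_q)`. -/
noncomputable def maslovB (n : ℕ) (ω : V →ₗ[K] V →ₗ[K] K) (v w : Fin n → V) : K :=
  (2 : K)⁻¹ * ∑ q : Fin n, ∑ p ∈ Finset.Iio q, (ω (v p) (w q) + ω (w p) (v q))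

/-!
The index sets `I` and `I'` meet exactly in `{i, j}`, so a vector of `E_I ⊓ E_{I'}` is supported
on `{i, j}` and `v_i = -v_j ∈ l_i ⊓ l_j = 0`. Since `l_i ⊕ l_j = V`, the components
of `v ∈ E` strictly between `i` and `j` can be balanced by vectors of `l_i` and `l_j` to give an
element of `E_{I'}`, and the remainder lies in `E_I`. For orthogonality, regroup `B(v, w)` as
`½ Σ_p (ω(v_p, Σ_{q>p} w_q) + ω(Σ_{q<p} w_q, v_p))`: for `w ∈ E_{I'}` both partial sums lie
in `l_p` when `p ∉ (i, j)`, while `v_p = 0` for `p ∈ (i, j)`, and `ω` vanishes on each line.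
-/

section Lines

variable {K V : Type*} [Field K] [AddCommGroup V] [Module K V]

theorem Submodule.span_singleton_eq_of_finrank_eq_one {W : Submodule K V}
    (hW : finrank K W = 1) {x : V} (hx : x ∈ W) (hx0 : x ≠ 0) : K ∙ x = W :=
  haveI := Module.finite_of_finrank_eq_succ hW
  Submodule.eq_of_le_of_finrank_eq ((Submodule.span_singleton_le_iff_mem _ _).2 hx)
    (by rw [finrank_span_singleton hx0, hW])

theorem Submodule.inf_eq_bot_of_finrank_eq_one {W W' : Submodule K V} (hW : finrank K W = 1)
    (hW' : finrank K W' = 1) (hne : W ≠ W') : W ⊓ W' = ⊥ := by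
  refine (Submodule.eq_bot_iff _).2 fun x ⟨hx, hx'⟩ => by_contra fun hx0 => hne ?_
  rw [← span_singleton_eq_of_finrank_eq_one hW hx hx0,
    ← span_singleton_eq_of_finrank_eq_one hW' hx' hx0]

theorem Submodule.sup_eq_top_of_finrank_eq_one [FiniteDimensional K V] (hdim : finrank K V = 2)
    {W W' : Submodule K V} (hW : finrank K W = 1) (hW' : finrank K W' = 1) (hne : W ≠ W') :
    W ⊔ W' = ⊤ := by
  apply Submodule.eq_top_of_finrank_eq
  have h := Submodule.finrank_sup_add_finrank_inf_eq W W'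
  rw [inf_eq_bot_of_finrank_eq_one hW hW' hne, finrank_bot, hW, hW'] at h
  omega

theorem LinearMap.apply_eq_zero_of_mem_of_finrank_eq_one (ω : V →ₗ[K] V →ₗ[K] K)
    (halt : ∀ v, ω v v = 0) {W : Submodule K V} (hW : finrank K W = 1) {x y : V} (hx : x ∈ W)
    (hy : y ∈ W) : ω x y = 0 := by
  rcases eq_or_ne x 0 with rfl | hx0
  · simp
  rw [← Submodule.span_singleton_eq_of_finrank_eq_one hW hx hx0,
    Submodule.mem_span_singleton] at hy
  obtain ⟨c, rfl⟩ := hy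
  simp [halt]

end Lines

section Maslov

variable {K V : Type*} [Field K] [AddCommGroup V] [Module K V] {n : ℕ}
  {l : Fin n → Submodule K V}

theorem mem_maslovE {v : Fin n → V} :
    v ∈ maslovE K V n l ↔ (∀ k, v k ∈ l k) ∧ ∑ k, v k = 0 := by
  simp [maslovE, sumProj, Submodule.mem_iInf, LinearMap.sum_apply]

theorem mem_maslovEI {I : Set (Fin n)} {v : Fin n → V} :
    v ∈ maslovEI K V n l I ↔ v ∈ maslovE K V n l ∧ ∀ k ∉ I, v k = 0 := by
  simp [maslovEI, Submodule.mem_iInf]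

theorem maslovEI_inf (I J : Set (Fin n)) :
    maslovEI K V n l I ⊓ maslovEI K V n l J = maslovEI K V n l (I ∩ J) := by
  ext v
  simp only [Submodule.mem_inf, mem_maslovEI, Set.mem_inter_iff, not_and_or]
  grind

theorem maslovEI_pair_eq_bot {a b : Fin n} (hab : a ≠ b) (hl : l a ⊓ l b = ⊥) :
    maslovEI K V n l {a, b} = ⊥ := by
  refine (Submodule.eq_bot_iff _).2 fun v hv => ?_
  obtain ⟨⟨hvl, hvs⟩, hv0⟩ := mem_maslovEI.1 hv |>.imp_left mem_maslovE.1
  have hv0' : ∀ k, k ≠ a → k ≠ b → v k = 0 := fun k hka hkb => hv0 k (by simp [hka, hkb])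
  have hsum : v a + v b = 0 := by
    rw [← hvs, Finset.sum_eq_add a b hab (fun k _ hk => hv0' k hk.1 hk.2) (by simp) (by simp)]
  have hva : v a = 0 := by
    refine (Submodule.eq_bot_iff _).1 hl _ ⟨hvl a, ?_⟩
    rw [eq_neg_of_add_eq_zero_left hsum]
    exact neg_mem (hvl b)
  have hvb : v b = 0 := by rwa [hva, zero_add] at hsum
  funext k
  by_cases hka : k = a
  · rwa [hka]
  by_cases hkb : k = b
  · rwa [hkb]
  exact hv0' k hka hkb

/-- The correction `w` keeps `v` on `J \ I` and subtracts a decomposition `x + y ∈ l a ⊔ l b` of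
the sum of those components. -/
theorem maslovEI_sup_eq_maslovE {I J : Set (Fin n)} (hIJ : I ∪ J = Set.univ) {a b : Fin n}
    (ha : a ∈ I ∩ J) (hb : b ∈ I ∩ J) (hl : l a ⊔ l b = ⊤) :
    maslovEI K V n l I ⊔ maslovEI K V n l J = maslovE K V n l := by
  refine le_antisymm (sup_le inf_le_left inf_le_left) fun v hv => ?_
  obtain ⟨hvl, hvs⟩ := mem_maslovE.1 hv
  obtain ⟨x, hx, y, hy, hxy⟩ :=
    Submodule.mem_sup.1 (hl ▸ Submodule.mem_top (x := ∑ k, (J \ I).indicator v k))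
  set w := (J \ I).indicator v - Pi.single a x - Pi.single b y with hw
  have hwl : ∀ k, w k ∈ l k := by
    intro k
    refine sub_mem (sub_mem ?_ ?_) ?_
    · by_cases hk : k ∈ J \ I <;> simp [Set.indicator, hk, hvl k]
    · by_cases hk : k = a <;> simp [hk, hx]
    · by_cases hk : k = b <;> simp [hk, hy]
  have hws : ∑ k, w k = 0 := by
    simp [hw, Finset.sum_sub_distrib, ← hxy]
  have hwJ : ∀ k ∉ J, w k = 0 := by
    intro k hk
    have hka : k ≠ a := by rintro rfl; exact hk ha.2
    have hkb : k ≠ b := by rintro rfl; exact hk hb.2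
    simp [hw, hk, hka, hkb]
  have hvwI : ∀ k ∉ I, (v - w) k = 0 := by
    intro k hk
    have hka : k ≠ a := by rintro rfl; exact hk ha.1
    have hkb : k ≠ b := by rintro rfl; exact hk hb.1
    have hkJ : k ∈ J := (Set.mem_union _ _ _).1 (hIJ ▸ Set.mem_univ k) |>.resolve_left hk
    simp [hw, hk, hkJ, hka, hkb]
  refine Submodule.mem_sup.2 ⟨v - w, ?_, w, ?_, sub_add_cancel v w⟩
  · refine mem_maslovEI.2 ⟨mem_maslovE.2 ⟨fun k => sub_mem (hvl k) (hwl k), ?_⟩, hvwI⟩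
    simp [Finset.sum_sub_distrib, hvs, hws]
  · exact mem_maslovEI.2 ⟨mem_maslovE.2 ⟨hwl, hws⟩, hwJ⟩

theorem Fin.sum_Iio_add_add_sum_Ioi {M : Type*} [AddCommMonoid M] (f : Fin n → M) (p : Fin n) :
    ∑ q ∈ Finset.Iio p, f q + f p + ∑ q ∈ Finset.Ioi p, f q = ∑ q, f q := by
  rw [Finset.sum_Iio_add_eq_sum_Iic,
    ← Finset.sum_filter_add_sum_filter_not Finset.univ (· ≤ p)]
  congr 2 <;> ext q <;> simp

theorem sum_Ioi_mem_of_mem_maslovEI_Icc {w : Fin n → V} {i j p : Fin n}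
    (hw : w ∈ maslovEI K V n l (Set.Icc i j)) (hp : p ∉ Set.Ioo i j) :
    ∑ q ∈ Finset.Ioi p, w q ∈ l p := by
  obtain ⟨⟨hwl, hws⟩, hw0⟩ := mem_maslovEI.1 hw |>.imp_left mem_maslovE.1
  rcases lt_trichotomy p i with hpi | rfl | hip
  · convert zero_mem (l p)
    rw [← hws]
    refine Finset.sum_subset (Finset.subset_univ _) fun q _ hq => hw0 q fun hq' => ?_
    exact hq (Finset.mem_Ioi.2 (hpi.trans_le hq'.1))
  · have hIci : ∑ q ∈ Finset.Ici p, w q = 0 := by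
      rw [← hws]
      refine Finset.sum_subset (Finset.subset_univ _) fun q _ hq => hw0 q fun hq' => ?_
      exact hq (Finset.mem_Ici.2 hq'.1)
    rw [← Finset.sum_Ioi_add_eq_sum_Ici, add_eq_zero_iff_eq_neg] at hIci
    exact hIci ▸ neg_mem (hwl p)
  · have hjp : j ≤ p := not_lt.1 fun hpj => hp ⟨hip, hpj⟩
    convert zero_mem (l p)
    exact Finset.sum_eq_zero fun q hq =>
      hw0 q fun hq' => (hjp.trans_lt (Finset.mem_Ioi.1 hq)).not_ge hq'.2

theorem sum_Iio_mem_of_mem_maslovEI_Icc {w : Fin n → V} {i j p : Fin n}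
    (hw : w ∈ maslovEI K V n l (Set.Icc i j)) (hp : p ∉ Set.Ioo i j) :
    ∑ q ∈ Finset.Iio p, w q ∈ l p := by
  obtain ⟨hwl, hws⟩ := mem_maslovE.1 (mem_maslovEI.1 hw).1
  have h := Fin.sum_Iio_add_add_sum_Ioi w p
  rw [hws, add_assoc, add_eq_zero_iff_eq_neg] at h
  exact h ▸ neg_mem (add_mem (hwl p) (sum_Ioi_mem_of_mem_maslovEI_Icc hw hp))

theorem maslovB_eq_sum (ω : V →ₗ[K] V →ₗ[K] K) (v w : Fin n → V) :
    maslovB K V n ω v w = (2 : K)⁻¹ * ∑ p,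
      (ω (v p) (∑ q ∈ Finset.Ioi p, w q) + ω (∑ q ∈ Finset.Iio p, w q) (v p)) := by
  simp only [maslovB, Finset.sum_add_distrib, map_sum, LinearMap.sum_apply]
  congr 2
  exact Finset.sum_comm' fun q p => by simp [and_comm]

theorem maslovB_eq_zero_of_mem_maslovEI (ω : V →ₗ[K] V →ₗ[K] K) (halt : ∀ v, ω v v = 0)
    (hl : ∀ k, finrank K (l k) = 1) {i j : Fin n} {v w : Fin n → V}
    (hv : v ∈ maslovEI K V n l (Set.Ioo i j)ᶜ) (hw : w ∈ maslovEI K V n l (Set.Icc i j)) :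
    maslovB K V n ω v w = 0 := by
  obtain ⟨⟨hvl, -⟩, hv0⟩ := mem_maslovEI.1 hv |>.imp_left mem_maslovE.1
  rw [maslovB_eq_sum, Finset.sum_eq_zero, mul_zero]
  intro p _
  by_cases hp : p ∈ Set.Ioo i j
  · simp [hv0 p (not_not.2 hp)]
  rw [ω.apply_eq_zero_of_mem_of_finrank_eq_one halt (hl p) (hvl p)
      (sum_Ioi_mem_of_mem_maslovEI_Icc hw hp),
    ω.apply_eq_zero_of_mem_of_finrank_eq_one halt (hl p)
      (sum_Iio_mem_of_mem_maslovEI_Icc hw hp) (hvl p), add_zero]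

end Maslov

theorem maslov_orthogonal_decomposition (m : ℕ)
    (ω : V →ₗ[K] V →ₗ[K] K)
    (halt : ∀ v : V, ω v v = 0)
    (hdim : finrank K V = 2)
    (l : Fin (m + 2) → Submodule K V)
    (hl : ∀ i, finrank K (l i) = 1)
    (hld : ∀ i j, i ≠ j → l i ≠ l j)
    (i j : Fin (m + 2)) (hij : i < j) :
    maslovEI K V (m + 2) l {k | k ≤ i ∨ j ≤ k} ⊓
        maslovEI K V (m + 2) l {k | i ≤ k ∧ k ≤ j} = ⊥ ∧
    maslovEI K V (m + 2) l {k | k ≤ i ∨ j ≤ k} ⊔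
        maslovEI K V (m + 2) l {k | i ≤ k ∧ k ≤ j} = maslovE K V (m + 2) l ∧
    ∀ v ∈ maslovEI K V (m + 2) l {k | k ≤ i ∨ j ≤ k},
      ∀ w ∈ maslovEI K V (m + 2) l {k | i ≤ k ∧ k ≤ j},
        maslovB K V (m + 2) ω v w = 0 := by
  have : FiniteDimensional K V := Module.finite_of_finrank_eq_succ hdim
  have hI : {k | k ≤ i ∨ j ≤ k} = (Set.Ioo i j)ᶜ := by ext; simp [or_iff_not_imp_left]
  have hIJ : {k | k ≤ i ∨ j ≤ k} ∩ {k | i ≤ k ∧ k ≤ j} = {i, j} := by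
    ext k
    simp only [Set.mem_inter_iff, Set.mem_ofPred_eq, Set.mem_insert_iff, Set.mem_singleton_iff]
    grind
  have hlij := hld i j hij.ne
  refine ⟨?_, ?_, fun v hv w hw => ?_⟩
  · rw [maslovEI_inf, hIJ]
    exact maslovEI_pair_eq_bot hij.ne (Submodule.inf_eq_bot_of_finrank_eq_one (hl i) (hl j) hlij)
  · have hcover : {k | k ≤ i ∨ j ≤ k} ∪ {k | i ≤ k ∧ k ≤ j} = Set.univ :=
      Set.eq_univ_of_forall fun k => by
        simp only [Set.mem_union, Set.mem_ofPred_eq]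
        grind
    exact maslovEI_sup_eq_maslovE hcover (by simp [hij.le]) (by simp [hij.le])
      (Submodule.sup_eq_top_of_finrank_eq_one hdim (hl i) (hl j) hlij)
  · rw [hI] at hv
    exact maslovB_eq_zero_of_mem_maslovEI ω halt hl hv hw
end

section
/- For |a1| < 1 and |a2| < 1, the double series Li_{n1,n2}(a1,a2) = Σ_{m1>m2>0} a1^{m1} a2^{m2}/(m1^{n1} m2^{n2}) converges absolutely, and the quasi-shuffle relation Li_{n1,n2}(a1,a2) + Li_{n2,n1}(a2,a1) + Li_{n1+n2}(a1 a2) = Li_{n1}(a1) · Li_{n2}(a2) holds, where Li_n(a) = Σ_{m≥1} a^m/m^n. -/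
/-- The term of the double polylogarithm series `Li_{n1,n2}(a1,a2)`, indexed over `ℕ × ℕ`
and vanishing outside the region `m1 > m2 > 0`. -/
noncomputable def dpolyTerm (n1 n2 : ℕ) (a1 a2 : ℂ) (p : ℕ × ℕ) : ℂ :=
  if p.2 < p.1 ∧ 0 < p.2 then
    a1 ^ p.1 * a2 ^ p.2 / ((p.1 : ℂ) ^ n1 * (p.2 : ℂ) ^ n2)
  else 0

/-- The term of the single polylogarithm series `Li_n(a)`. -/
noncomputable def polyTerm (n : ℕ) (a : ℂ) (m : ℕ) : ℂ :=
  if 0 < m then a ^ m / (m : ℂ) ^ n else 0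

/-!
Expanding `Li_{n1}(a1) · Li_{n2}(a2)` as a double series over `(m1, m2)` with `m1, m2 > 0` and
splitting the index set into `m1 > m2`, `m2 > m1` and `m1 = m2` gives the three terms on the left:
the diagonal contributes `(a1 a2)^m / m^{n1+n2}`. Everything is dominated by the absolutely
convergent product of two geometric series, which justifies the rearrangement.
-/

noncomputable def diagPolyTerm (n : ℕ) (a : ℂ) (p : ℕ × ℕ) : ℂ :=
  if p.1 = p.2 then polyTerm n a p.1 else 0

lemma norm_polyTerm_le (n : ℕ) (a : ℂ) (m : ℕ) : ‖polyTerm n a m‖ ≤ ‖a‖ ^ m := by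
  unfold polyTerm
  split_ifs with hm
  · rw [norm_div, norm_pow, norm_pow, Complex.norm_natCast]
    exact div_le_self (by positivity) (one_le_pow₀ (by exact_mod_cast hm))
  · simp only [norm_zero]
    positivity

lemma summable_norm_polyTerm (n : ℕ) {a : ℂ} (ha : ‖a‖ < 1) :
    Summable fun m => ‖polyTerm n a m‖ :=
  .of_nonneg_of_le (fun _ => norm_nonneg _) (norm_polyTerm_le n a)
    (summable_geometric_of_lt_one (norm_nonneg a) ha)

lemma norm_dpolyTerm_le (n1 n2 : ℕ) (a1 a2 : ℂ) (p : ℕ × ℕ) :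
    ‖dpolyTerm n1 n2 a1 a2 p‖ ≤ ‖polyTerm n1 a1 p.1 * polyTerm n2 a2 p.2‖ := by
  by_cases h : p.2 < p.1 ∧ 0 < p.2
  · rw [dpolyTerm, polyTerm, polyTerm, if_pos h, if_pos (h.2.trans h.1), if_pos h.2,
      mul_div_mul_comm]
  · rw [dpolyTerm, if_neg h, norm_zero]
    exact norm_nonneg _

lemma summable_norm_dpolyTerm (n1 n2 : ℕ) {a1 a2 : ℂ} (ha1 : ‖a1‖ < 1) (ha2 : ‖a2‖ < 1) :
    Summable fun p : ℕ × ℕ => ‖dpolyTerm n1 n2 a1 a2 p‖ :=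
  .of_nonneg_of_le (fun _ => norm_nonneg _) (norm_dpolyTerm_le n1 n2 a1 a2)
    ((summable_norm_polyTerm n1 ha1).mul_norm (summable_norm_polyTerm n2 ha2))

lemma hasSum_diagPolyTerm_iff (n : ℕ) (a : ℂ) (s : ℂ) :
    HasSum (diagPolyTerm n a) s ↔ HasSum (polyTerm n a) s := by
  have hdiag : Function.Injective fun m : ℕ => (m, m) := fun _ _ h => congrArg Prod.fst h
  have hsupp : ∀ p ∉ Set.range fun m : ℕ => (m, m), diagPolyTerm n a p = 0 := by
    rintro ⟨m1, m2⟩ hp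
    exact if_neg fun h : m1 = m2 => hp ⟨m1, by rw [h]⟩
  have hcomp : diagPolyTerm n a ∘ (fun m => (m, m)) = polyTerm n a := funext fun _ => if_pos rfl
  rw [← hdiag.hasSum_iff hsupp, hcomp]

lemma polyTerm_mul_polyTerm (n1 n2 : ℕ) (a1 a2 : ℂ) (p : ℕ × ℕ) :
    polyTerm n1 a1 p.1 * polyTerm n2 a2 p.2 =
      dpolyTerm n1 n2 a1 a2 p + dpolyTerm n2 n1 a2 a1 p.swap +
        diagPolyTerm (n1 + n2) (a1 * a2) p := by
  obtain ⟨m1, m2⟩ := p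
  simp only [dpolyTerm, polyTerm, diagPolyTerm, Prod.swap]
  rcases Nat.eq_zero_or_pos m1 with rfl | h1
  · simp
  rcases Nat.eq_zero_or_pos m2 with rfl | h2
  · simp [h1.ne']
  rcases lt_trichotomy m1 m2 with h | rfl | h
  · simp [h1, h2, h, h.ne, h.not_gt, mul_div_mul_comm, mul_comm]
  · simp [h1, mul_pow, pow_add, mul_div_mul_comm]
  · simp [h1, h2, h, h.ne', h.not_gt, mul_div_mul_comm]

theorem double_polylog_summable_and_quasiShuffle_general (n1 n2 : ℕ)
    (a1 a2 : ℂ) (ha1 : ‖a1‖ < 1) (ha2 : ‖a2‖ < 1) :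
    (Summable fun p : ℕ × ℕ => ‖dpolyTerm n1 n2 a1 a2 p‖) ∧
    (∑' p : ℕ × ℕ, dpolyTerm n1 n2 a1 a2 p) + (∑' p : ℕ × ℕ, dpolyTerm n2 n1 a2 a1 p) +
        (∑' m : ℕ, polyTerm (n1 + n2) (a1 * a2) m) =
      (∑' m : ℕ, polyTerm n1 a1 m) * (∑' m : ℕ, polyTerm n2 a2 m) := by
  have h1 := summable_norm_polyTerm n1 ha1
  have h2 := summable_norm_polyTerm n2 ha2
  have ha12 : ‖a1 * a2‖ < 1 := by
    rw [norm_mul]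
    exact mul_lt_one_of_nonneg_of_lt_one_left (norm_nonneg a1) ha1 ha2.le
  refine ⟨summable_norm_dpolyTerm n1 n2 ha1 ha2, ?_⟩
  have hprod := h1.of_norm.hasSum.mul h2.of_norm.hasSum (summable_mul_of_summable_norm h1 h2)
  simp only [polyTerm_mul_polyTerm] at hprod
  have hdpoly := (summable_norm_dpolyTerm n1 n2 ha1 ha2).of_norm.hasSum
  have hdpoly_swap := (Equiv.prodComm ℕ ℕ).hasSum_iff.mpr
    (summable_norm_dpolyTerm n2 n1 ha2 ha1).of_norm.hasSum
  have hdiag := (hasSum_diagPolyTerm_iff (n1 + n2) (a1 * a2) _).mpr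
    (summable_norm_polyTerm (n1 + n2) ha12).of_norm.hasSum
  exact ((hdpoly.add hdpoly_swap).add hdiag).unique hprod

/-- For `|a1| < 1`, `|a2| < 1` and positive integers `n1, n2`, the double series
`Li_{n1,n2}(a1,a2) = Σ_{m1>m2>0} a1^{m1} a2^{m2}/(m1^{n1} m2^{n2})` converges absolutely, and
the quasi-shuffle relation
`Li_{n1,n2}(a1,a2) + Li_{n2,n1}(a2,a1) + Li_{n1+n2}(a1·a2) = Li_{n1}(a1) · Li_{n2}(a2)` holds. -/
theorem double_polylog_summable_and_quasiShuffle (n1 n2 : ℕ) (hn1 : 0 < n1) (hn2 : 0 < n2)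
    (a1 a2 : ℂ) (ha1 : ‖a1‖ < 1) (ha2 : ‖a2‖ < 1) :
    (Summable fun p : ℕ × ℕ => ‖dpolyTerm n1 n2 a1 a2 p‖) ∧
    (∑' p : ℕ × ℕ, dpolyTerm n1 n2 a1 a2 p) + (∑' p : ℕ × ℕ, dpolyTerm n2 n1 a2 a1 p) +
        (∑' m : ℕ, polyTerm (n1 + n2) (a1 * a2) m) =
      (∑' m : ℕ, polyTerm n1 a1 m) * (∑' m : ℕ, polyTerm n2 a2 m) :=
  double_polylog_summable_and_quasiShuffle_general n1 n2 a1 a2 ha1 ha2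
end

section
/- In the Connes–Kreimer Hopf algebra of decorated rooted trees, the grafting operator B_a^+ is a Hochschild 1-cocycle: Δ(B_a^+(t)) = (B_a^+ ⊗ id)(Δ(t)) + 1 ⊗ B_a^+(t) for every forest t. -/
/-!
An admissible cut of `B_a^+(t₁ ⋯ tₙ)` is the same as a choice, for every `tᵢ`, of either the
edge from the new root to `tᵢ` or an admissible (possibly empty) cut of `tᵢ`, that is, of a
term `Rᵢ ⊗ Pᵢ` of `Δ(tᵢ)` (cutting the edge gives `1 ⊗ tᵢ`). The root component of the cut is
`B_a^+(R₁ ⋯ Rₙ)` and the pruned part is `P₁ ⋯ Pₙ`, so the cuts of `B_a^+(t₁ ⋯ tₙ)` give exactly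
`(B_a^+ ⊗ id)(Δ(t₁ ⋯ tₙ))`; the remaining term of `Δ(B_a^+(t₁ ⋯ tₙ))` is `1 ⊗ B_a^+(t₁ ⋯ tₙ)`.
To compare the two sides we write both coproducts as formal sums of lists of terms.
-/

/-- Rooted trees with vertices decorated by `A` (a forest of subtrees above the root). -/
inductive PTree (A : Type*) : Type _ where
  | node : A → List (PTree A) → PTree A

/-- All admissible cuts of a rooted tree `t` (including the empty cut), each recorded as the
pair `(R^c(t), P^c(t))` of the root component and the list of pruned components. An admissible
cut meets each root-to-vertex path at most once; it is obtained by choosing, for every child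
subtree, either to cut the edge to it, or an admissible cut of the child. -/
def cuts {A : Type*} : PTree A → List (PTree A × List (PTree A))
  | .node a cs =>
    (cs.attach.foldr
        (fun c acc =>
          ((([], [c.1]) :: (cuts c.1).map fun rp => ([rp.1], rp.2)).flatMap
            fun x => acc.map fun y => (x.1 ++ y.1, x.2 ++ y.2)))
        [([], [])]).map fun rp => (PTree.node a rp.1, rp.2)
  termination_by t => sizeOf t
  decreasing_by
    have h := List.sizeOf_lt_of_mem c.2
    simp only [PTree.node.sizeOf_spec]
    omega

/-- The Connes–Kreimer coproduct of a single tree, with values in the free `ℚ`-vector space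
on pairs of forests (representing the tensor square):
`Δ(t) = 1⊗t + Σ_{c admissible cut} R^c(t) ⊗ P^c(t)` (the term `t⊗1` being the empty cut). -/
noncomputable def deltaTree {A : Type*} (t : PTree A) :
    (List (PTree A) × List (PTree A)) →₀ ℚ :=
  Finsupp.single (([] : List (PTree A)), [t]) 1 +
    ((cuts t).map fun rp => Finsupp.single (([rp.1], rp.2)) (1 : ℚ)).sum

/-- The Connes–Kreimer coproduct of a forest, extended multiplicatively. -/
noncomputable def deltaForest {A : Type*} : List (PTree A) →
    ((List (PTree A) × List (PTree A)) →₀ ℚ)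
  | [] => Finsupp.single (([] : List (PTree A)), ([] : List (PTree A))) 1
  | t :: ts => (deltaTree t).sum fun p c => (deltaForest ts).sum fun q d =>
      (c * d) • Finsupp.single ((p.1 ++ q.1, p.2 ++ q.2)) (1 : ℚ)

section FormalSum

variable {α β γ : Type*} (R : Type*) [Semiring R]

noncomputable def formalSum (L : List α) : α →₀ R :=
  (L.map fun p => Finsupp.single p 1).sum

variable {R}

lemma formalSum_cons (p : α) (L : List α) :
    formalSum R (p :: L) = Finsupp.single p 1 + formalSum R L := by
  simp only [formalSum, List.map_cons, List.sum_cons]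

lemma formalSum_flatMap (L : List α) (g : α → List β) :
    formalSum R (L.flatMap g) = (L.map fun p => formalSum R (g p)).sum := by
  simp only [formalSum, List.flatMap, List.map_flatten, List.sum_flatten, List.map_map,
    Function.comp_def]

lemma sum_formalSum_index {M : Type*} [AddCommMonoid M] {h : α → R → M}
    (h_zero : ∀ p, h p 0 = 0) (h_add : ∀ p c d, h p (c + d) = h p c + h p d) (L : List α) :
    (formalSum R L).sum h = (L.map fun p => h p 1).sum := by
  induction L with
  | nil => simp [formalSum]
  | cons p L ih =>
    rw [formalSum_cons, Finsupp.sum_add_index' h_zero h_add, Finsupp.sum_single_index (h_zero p),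
      ih, List.map_cons, List.sum_cons]

lemma mapDomain_formalSum (g : α → β) (L : List α) :
    Finsupp.mapDomain g (formalSum R L) = formalSum R (L.map g) := by
  induction L with
  | nil => simp [formalSum]
  | cons p L ih =>
    rw [formalSum_cons, Finsupp.mapDomain_add, Finsupp.mapDomain_single, ih, List.map_cons,
      formalSum_cons]

lemma sum_smul_single_formalSum (m : β → γ) (c : R) (L : List β) :
    ((formalSum R L).sum fun q d => (c * d) • Finsupp.single (m q) (1 : R)) =
      c • formalSum R (L.map m) := by
  rw [sum_formalSum_index (by simp) (by simp [mul_add, add_smul]), formalSum, List.smul_sum,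
    List.map_map]
  simp [Function.comp_def]

lemma sum_sum_formalSum_mul (m : α → β → γ) (L₁ : List α) (L₂ : List β) :
    ((formalSum R L₁).sum fun p c => (formalSum R L₂).sum fun q d =>
        (c * d) • Finsupp.single (m p q) (1 : R)) =
      formalSum R (L₁.flatMap fun p => L₂.map (m p)) := by
  simp only [sum_smul_single_formalSum]
  rw [sum_formalSum_index (by simp) (by simp [add_smul]), formalSum_flatMap]
  simp only [one_smul]

end FormalSum

section Coproduct

variable {A : Type*}

def coproductTerms (t : PTree A) : List (List (PTree A) × List (PTree A)) :=
  ([], [t]) :: (cuts t).map fun rp => ([rp.1], rp.2)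

def forestCoproductTerms : List (PTree A) → List (List (PTree A) × List (PTree A))
  | [] => [([], [])]
  | t :: ts => (coproductTerms t).flatMap fun x =>
      (forestCoproductTerms ts).map fun y => (x.1 ++ y.1, x.2 ++ y.2)

lemma deltaTree_eq_formalSum (t : PTree A) :
    deltaTree t = formalSum ℚ (coproductTerms t) := by
  rw [deltaTree, coproductTerms, formalSum_cons, formalSum, List.map_map]
  rfl

lemma deltaForest_eq_formalSum (f : List (PTree A)) :
    deltaForest f = formalSum ℚ (forestCoproductTerms f) := by
  induction f with
  | nil => simp [deltaForest, forestCoproductTerms, formalSum]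
  | cons t ts ih =>
    rw [deltaForest, ih, deltaTree_eq_formalSum, sum_sum_formalSum_mul, forestCoproductTerms]

lemma cuts_node (a : A) (f : List (PTree A)) :
    cuts (PTree.node a f) =
      (forestCoproductTerms f).map fun rp => (PTree.node a rp.1, rp.2) := by
  rw [cuts]
  congr 1
  refine (List.foldr_attach
    (f := fun (c : PTree A) (acc : List (List (PTree A) × List (PTree A))) =>
      (coproductTerms c).flatMap fun x => acc.map fun y => (x.1 ++ y.1, x.2 ++ y.2))).trans ?_
  induction f with
  | nil => rfl
  | cons t ts ih => rw [List.foldr_cons, ih, forestCoproductTerms]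

end Coproduct

/-- In the Connes–Kreimer Hopf algebra of decorated rooted trees, the grafting operator
`B_a^+` is a Hochschild 1-cocycle: `Δ(B_a^+(t)) = (B_a^+ ⊗ id)(Δ(t)) + 1 ⊗ B_a^+(t)` for
every forest `t`. -/
theorem connesKreimer_graft_cocycle {A : Type*} (a : A) (f : List (PTree A)) :
    deltaTree (PTree.node a f) =
      Finsupp.mapDomain (fun p : List (PTree A) × List (PTree A) =>
          ([PTree.node a p.1], p.2)) (deltaForest f) +
        Finsupp.single (([] : List (PTree A)), [PTree.node a f]) 1 := by
  rw [deltaTree_eq_formalSum, coproductTerms, formalSum_cons, cuts_node, List.map_map,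
    deltaForest_eq_formalSum, mapDomain_formalSum, add_comm]
  rfl
end
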